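/- arXiv:2511.07782 — 6 statements merged into one kernel-verified Lean document; each statement's English description precedes it below -/
import Mathlib

section
/- The function F on S^1 × R^m defined by F(e^{ix}, y) = sin(x - κ⟨y, y₀⟩), where y₀ is a fixed unit vector in R^m and κ ∈ R, satisfies ‖∇F‖² = (1+κ²)(1-F²). -/
/-! The lift of `F` is `z ↦ sin ⟪v, z⟫` for `v = (1, -κ y₀)`, whose gradient is `cos ⟪v, z⟫ • v`.
Hence `‖∇F‖² = ‖v‖² cos² = (1 + κ²)(1 - F²)`, as `‖v‖² = 1 + κ² ‖y₀‖²`. -/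

open Real InnerProductSpace

section SinInner

variable {E : Type*} [NormedAddCommGroup E] [InnerProductSpace ℝ E] [CompleteSpace E]

theorem hasGradientAt_sin_inner (v z : E) :
    HasGradientAt (fun w => sin ⟪v, w⟫_ℝ) (cos ⟪v, z⟫_ℝ • v) z := by
  rw [hasGradientAt_iff_hasFDerivAt]
  refine ((hasDerivAt_sin _).comp_hasFDerivAt z (innerSL ℝ v).hasFDerivAt).congr_fderiv ?_
  ext w
  simp

theorem norm_gradient_sin_inner_sq (v z : E) :
    ‖gradient (fun w => sin ⟪v, w⟫_ℝ) z‖ ^ 2 = ‖v‖ ^ 2 * (1 - sin ⟪v, z⟫_ℝ ^ 2) := by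
  rw [(hasGradientAt_sin_inner v z).gradient, norm_smul, mul_pow, norm_eq_abs, sq_abs,
    ← cos_sq', mul_comm]

end SinInner

namespace EuclideanSpace

variable {m : ℕ}

def cons (a : ℝ) (u : EuclideanSpace ℝ (Fin m)) : EuclideanSpace ℝ (Fin (m + 1)) :=
  WithLp.toLp 2 (Fin.cons a u.ofLp)

theorem inner_cons (a : ℝ) (u : EuclideanSpace ℝ (Fin m)) (w : EuclideanSpace ℝ (Fin (m + 1))) :
    ⟪cons a u, w⟫_ℝ = a * w 0 + ∑ i, u i * w i.succ := by
  simp [cons, PiLp.inner_apply, Fin.sum_univ_succ, mul_comm]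

theorem norm_cons_sq (a : ℝ) (u : EuclideanSpace ℝ (Fin m)) :
    ‖cons a u‖ ^ 2 = a ^ 2 + ‖u‖ ^ 2 := by
  simp [EuclideanSpace.norm_sq_eq, Fin.sum_univ_succ, cons]

end EuclideanSpace

theorem stmt0 (m : ℕ) (κ : ℝ) (y₀ : EuclideanSpace ℝ (Fin m)) (hy₀ : ‖y₀‖ = 1)
    (F : EuclideanSpace ℝ (Fin (m + 1)) → ℝ)
    (hF : ∀ z, F z = Real.sin (z 0 - κ * ∑ i : Fin m, z i.succ * y₀ i)) :
    ∀ z, ‖gradient F z‖ ^ 2 = (1 + κ ^ 2) * (1 - (F z) ^ 2) := by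
  intro z
  set v := EuclideanSpace.cons 1 (-κ • y₀)
  have hFv : F = fun w => sin ⟪v, w⟫_ℝ := by
    ext w
    simp [hF, v, EuclideanSpace.inner_cons, Finset.mul_sum, mul_comm, mul_assoc,
      sub_eq_add_neg]
  have hv : ‖v‖ ^ 2 = 1 + κ ^ 2 := by
    simp [v, EuclideanSpace.norm_cons_sq, norm_smul, hy₀]
  rw [hFv, norm_gradient_sin_inner_sq, hv]
end

section
/- The function F on S^1 × R^m defined by F(e^{ix}, y) = sin(x - κ⟨y, y₀⟩), where y₀ is a fixed unit vector in R^m and κ ∈ R, satisfies ΔF = -(1+κ²)F, and hence is isoparametric. -/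
open RealInnerProductSpace

lemma sin_affine_deriv2 (S c : ℝ) :
    iteratedDeriv 2 (fun t : ℝ => Real.sin (S + c * t)) 0 = -(c ^ 2) * Real.sin S := by
  have hd : ∀ t : ℝ, HasDerivAt (fun t : ℝ => S + c * t) c t := by
    intro t
    simpa using (((hasDerivAt_id t).const_mul c).const_add S)
  have h1 : (deriv fun t : ℝ => Real.sin (S + c * t)) = fun t => Real.cos (S + c * t) * c := by
    funext t
    exact ((hd t).sin).deriv
  have h2 : deriv (fun t : ℝ => Real.cos (S + c * t) * c) 0 = -Real.sin (S + c * 0) * c * c :=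
    (((hd 0).cos).mul_const c).deriv
  rw [show (2 : ℕ) = 1 + 1 from rfl, iteratedDeriv_succ, iteratedDeriv_one, h1, h2]
  simp; ring


/-- The Laplace–Beltrami operator of the flat space ℝ^{m+1} (the Riemannian universal
cover of S¹ × ℝ^m, a local isometry): sum of second derivatives along the coordinate
directions. -/
noncomputable def flatLaplacian {k : ℕ} (F : EuclideanSpace ℝ (Fin k) → ℝ)
    (z : EuclideanSpace ℝ (Fin k)) : ℝ :=
  ∑ i : Fin k, iteratedDeriv 2 (fun t : ℝ => F (z + t • EuclideanSpace.single i 1)) 0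

/- STATEMENT 1: F(e^{ix}, y) = sin(x - κ⟨y, y₀⟩) on S¹ × ℝ^m satisfies ΔF = -(1+κ²)F,
and hence (being transnormal with b(t) = (1+κ²)(1-t²)) is isoparametric. -/
set_option maxHeartbeats 1000000 in
theorem stmt1 (m : ℕ) (κ : ℝ) (y₀ : EuclideanSpace ℝ (Fin m)) (hy₀ : ‖y₀‖ = 1)
    (F : EuclideanSpace ℝ (Fin (m + 1)) → ℝ)
    (hF : ∀ z, F z = Real.sin (z 0 - κ * ∑ i : Fin m, z i.succ * y₀ i)) :
    (∀ z, flatLaplacian F z = -(1 + κ ^ 2) * F z) ∧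
    ∃ b a : ℝ → ℝ, ContDiff ℝ (⊤ : ℕ∞) b ∧ Continuous a ∧
      ∀ z, ‖gradient F z‖ ^ 2 = b (F z) ∧ flatLaplacian F z = a (F z) := by
  set v : EuclideanSpace ℝ (Fin (m + 1)) :=
    WithLp.toLp 2 (fun i => Fin.cases 1 (fun j => -κ * y₀ j) i) with hv
  have hv0 : v 0 = 1 := rfl
  have hvs : ∀ j : Fin m, v j.succ = -κ * y₀ j := fun j => rfl
  -- F in terms of the linear form
  have hFz : ∀ z : EuclideanSpace ℝ (Fin (m+1)),
      F z = Real.sin (∑ i, v i * z i) := by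
    intro z
    rw [hF z, Fin.sum_univ_succ, hv0, one_mul]
    congr 1
    simp only [hvs]
    have h : κ * ∑ i, z i.succ * y₀ i = -∑ j : Fin m, -κ * y₀ j * z j.succ := by
      rw [Finset.mul_sum, ← Finset.sum_neg_distrib]
      exact Finset.sum_congr rfl fun j _ => by ring
    rw [h, sub_neg_eq_add]
  -- sum of squares
  have hy : ∑ i, y₀ i ^ 2 = 1 := by
    have h1 := EuclideanSpace.norm_eq y₀
    rw [hy₀] at h1
    have h2 : (1:ℝ) = ∑ i, ‖y₀ i‖ ^ 2 := by
      have := congrArg (· ^ 2) h1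
      simpa [Real.sq_sqrt (Finset.sum_nonneg fun i _ => sq_nonneg _)] using this
    simpa [Real.norm_eq_abs, sq_abs] using h2.symm
  have hvnorm : ∑ i, v i ^ 2 = 1 + κ ^ 2 := by
    rw [Fin.sum_univ_succ, hv0]
    simp only [hvs]
    rw [show ∑ j : Fin m, (-κ * y₀ j) ^ 2 = κ^2 * ∑ j, y₀ j ^ 2 by
      rw [Finset.mul_sum]; exact Finset.sum_congr rfl fun j _ => by ring, hy]
    ring
  -- Laplacian computation
  have hlap : ∀ z, flatLaplacian F z = -(1 + κ ^ 2) * F z := by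
    intro z
    have hdir : ∀ i : Fin (m+1), (fun t : ℝ => F (z + t • EuclideanSpace.single i 1))
        = fun t => Real.sin ((∑ j, v j * z j) + v i * t) := by
      intro i
      funext t
      rw [hFz]
      congr 1
      have : ∀ j : Fin (m+1), (z + t • EuclideanSpace.single i (1:ℝ)) j
          = z j + t * (if j = i then 1 else 0) := by
        intro j
        simp [EuclideanSpace.single_apply]
      simp only [this, mul_add]
      rw [Finset.sum_add_distrib]
      congr 1
      simp [mul_ite, Finset.sum_ite_eq', mul_comm]
    unfold flatLaplacian
    simp only [hdir, sin_affine_deriv2, hFz z]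
    rw [← Finset.sum_mul, Finset.sum_neg_distrib, hvnorm]
  refine ⟨hlap, fun t => (1 + κ^2) * (1 - t^2), fun t => -(1 + κ^2) * t, ?_, ?_, ?_⟩
  · fun_prop
  · fun_prop
  · intro z
    refine ⟨?_, by rw [hlap z]⟩
    -- gradient
    have hinner : ∀ w : EuclideanSpace ℝ (Fin (m+1)),
        ⟪v, w⟫ = ∑ i, v i * w i := by
      intro w
      simp [PiLp.inner_apply, RCLike.inner_apply, mul_comm]
    have hgrad : HasGradientAt F (Real.cos (∑ i, v i * z i) • v) z := by
      have h1 : HasFDerivAt (fun w : EuclideanSpace ℝ (Fin (m+1)) => Real.sin ⟪v, w⟫)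
          (Real.cos ⟪v, z⟫ • innerSL ℝ v) z := ((innerSL ℝ v).hasFDerivAt (x := z)).sin
      have hFeq : F = fun w : EuclideanSpace ℝ (Fin (m+1)) => Real.sin ⟪v, w⟫ := by
        funext w; rw [hFz w, hinner w]
      rw [hFeq, hasGradientAt_iff_hasFDerivAt]
      have : (InnerProductSpace.toDual ℝ _) (Real.cos (∑ i, v i * z i) • v)
          = Real.cos ⟪v, z⟫ • innerSL ℝ v := by
        ext w
        simp [InnerProductSpace.toDual_apply_apply, real_inner_smul_left, hinner]
      rw [this]
      exact h1
    rw [hgrad.gradient, hFz z]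
    have hnv : ‖v‖ ^ 2 = 1 + κ ^ 2 := by
      rw [← hvnorm, EuclideanSpace.norm_eq,
        Real.sq_sqrt (Finset.sum_nonneg fun i _ => sq_nonneg _)]
      exact Finset.sum_congr rfl fun i _ => by rw [Real.norm_eq_abs, sq_abs]
    rw [norm_smul, mul_pow, hnv, Real.norm_eq_abs, sq_abs, Real.cos_sq']
    ring
end

section
/- Let u be a nonzero lightlike vector in Lorentz space L^{n+1} with u₀ > 0, v₀ a unit vector in R^m, y₀ ∈ R^m and a ∈ R. The function F on H^n × R^m defined by F(x,y) = ⟨x,u⟩_L · exp(a⟨y - y₀, v₀⟩) satisfies ‖∇F‖² = (1+a²)F². -/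
open RealInnerProductSpace

/-- The Lorentz inner product on L^{n+1}. -/
noncomputable def lorentzInner {n : ℕ} (x y : EuclideanSpace ℝ (Fin (n + 1))) : ℝ :=
  -(x 0 * y 0) + ∑ i : Fin n, x i.succ * y i.succ

lemma lorentzInner_comm {n : ℕ} (x y : EuclideanSpace ℝ (Fin (n + 1))) :
    lorentzInner x y = lorentzInner y x := by
  unfold lorentzInner
  congr 1
  · ring
  · exact Finset.sum_congr rfl fun i _ => mul_comm _ _

lemma lorentzInner_expand {n : ℕ} (r c : ℝ) (u x : EuclideanSpace ℝ (Fin (n + 1))) :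
    lorentzInner (r • (u + c • x)) (r • (u + c • x)) =
      r ^ 2 * (lorentzInner u u + 2 * c * lorentzInner u x + c ^ 2 * lorentzInner x x) := by
  unfold lorentzInner
  have h : ∀ i : Fin n, (r • (u + c • x)) i.succ * (r • (u + c • x)) i.succ =
      r ^ 2 * (u i.succ * u i.succ) + (r ^ 2 * (2 * c)) * (u i.succ * x i.succ)
        + (r ^ 2 * c ^ 2) * (x i.succ * x i.succ) := by
    intro i
    simp only [PiLp.smul_apply, PiLp.add_apply, smul_eq_mul]
    ring
  rw [Finset.sum_congr rfl fun i _ => h i, Finset.sum_add_distrib, Finset.sum_add_distrib,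
    ← Finset.mul_sum, ← Finset.mul_sum, ← Finset.mul_sum]
  simp only [PiLp.smul_apply, PiLp.add_apply, smul_eq_mul]
  ring

theorem stmt2 (n m : ℕ) (a : ℝ)
    (u : EuclideanSpace ℝ (Fin (n + 1)))
    (hu_light : lorentzInner u u = 0) (hu_ne : u ≠ 0) (hu0 : 0 < u 0)
    (v₀ : EuclideanSpace ℝ (Fin m)) (hv₀ : ‖v₀‖ = 1)
    (y₀ : EuclideanSpace ℝ (Fin m))
    (F : EuclideanSpace ℝ (Fin (n + 1)) → EuclideanSpace ℝ (Fin m) → ℝ)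
    (hF : ∀ x y, F x y = lorentzInner x u * Real.exp (a * ⟪y - y₀, v₀⟫)) :
    ∀ x, lorentzInner x x = -1 → 0 < x 0 → ∀ y,
      lorentzInner (Real.exp (a * ⟪y - y₀, v₀⟫) • (u + lorentzInner x u • x))
          (Real.exp (a * ⟪y - y₀, v₀⟫) • (u + lorentzInner x u • x))
        + ‖(a * lorentzInner x u * Real.exp (a * ⟪y - y₀, v₀⟫)) • v₀‖ ^ 2
        = (1 + a ^ 2) * (F x y) ^ 2 := by
  intro x hx hx0 y
  rw [lorentzInner_expand, hF, norm_smul, mul_pow, hv₀]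
  rw [lorentzInner_comm u x] at *
  simp [hu_light, hx, abs_mul, sq_abs, mul_pow]
  ring
end

section
/- With the recurrence p_{k+1,ℓ}^q = q·p_{k,ℓ}^{q-1} + ℓ·p_{k,ℓ-1}^q - (n-1-ℓ)·cτ²·p_{k,ℓ+1}^q and initial condition p_{0,0}^0 = 1 (all other p_{0,ℓ}^q = 0), one has p_{k,k-q}^q = k! for all k ≥ 0 and 0 ≤ q ≤ min(k, m). -/
/- STATEMENT 16: with the recurrence
p_{k+1,ℓ}^q = q p_{k,ℓ}^{q-1} + ℓ p_{k,ℓ-1}^q - (n-1-ℓ) cτ² p_{k,ℓ+1}^q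
and initial condition p_{0,0}^0 = 1 (all other p_{0,ℓ}^q = 0), one has
p_{k,k-q}^q = k!  for all k ≥ 0 and 0 ≤ q ≤ min(k,m) (the indices ranging over
0 ≤ ℓ = k - q ≤ n-1, 0 ≤ q ≤ m). -/
theorem stmt16 (n m : ℕ) (hn : 1 ≤ n) (c τ : ℝ)
    (P : ℕ → ℕ → ℕ → ℝ)
    (hP00 : P 0 0 0 = 1)
    (hP0 : ∀ ℓ q, ℓ ≤ n - 1 → q ≤ m → ¬(ℓ = 0 ∧ q = 0) → P 0 ℓ q = 0)
    (hrec : ∀ k ℓ q, ℓ ≤ n - 1 → q ≤ m →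
      P (k + 1) ℓ q
        = (q : ℝ) * P k ℓ (q - 1) + (ℓ : ℝ) * P k (ℓ - 1) q
          - ((n - 1 - ℓ : ℕ) : ℝ) * c * τ ^ 2 * P k (ℓ + 1) q) :
    ∀ k q, q ≤ m → q ≤ k → k - q ≤ n - 1 →
      P k (k - q) q = (Nat.factorial k : ℝ) := by
  have haux : ∀ k ℓ q, ℓ ≤ n - 1 → q ≤ m → k < ℓ + q → P k ℓ q = 0 := by
    intro k
    induction k with
    | zero =>
      intro ℓ q hℓ hq hk
      exact hP0 ℓ q hℓ hq (by rintro ⟨rfl, rfl⟩; omega)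
    | succ k ih =>
      intro ℓ q hℓ hq hk
      rw [hrec k ℓ q hℓ hq]
      have h1 : (q : ℝ) * P k ℓ (q - 1) = 0 := by
        rcases Nat.eq_zero_or_pos q with h | h
        · simp [h]
        · rw [ih ℓ (q - 1) hℓ (by omega) (by omega)]; ring
      have h2 : (ℓ : ℝ) * P k (ℓ - 1) q = 0 := by
        rcases Nat.eq_zero_or_pos ℓ with h | h
        · simp [h]
        · rw [ih (ℓ - 1) q (by omega) hq (by omega)]; ring
      have h3 : ((n - 1 - ℓ : ℕ) : ℝ) * c * τ ^ 2 * P k (ℓ + 1) q = 0 := by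
        rcases Nat.lt_or_ge ℓ (n - 1) with h | h
        · rw [ih (ℓ + 1) q (by omega) hq (by omega)]; ring
        · have hz : n - 1 - ℓ = 0 := by omega
          rw [hz]; simp
      rw [h1, h2, h3]; ring
  intro k
  induction k with
  | zero =>
    intro q hq hqk hl
    obtain rfl : q = 0 := by omega
    simpa using hP00
  | succ k ih =>
    intro q hq hqk hl
    rw [hrec k (k + 1 - q) q hl hq]
    have h1 : (q : ℝ) * P k (k + 1 - q) (q - 1) = (q : ℝ) * Nat.factorial k := by
      rcases Nat.eq_zero_or_pos q with h | h
      · simp [h]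
      · have he : k + 1 - q = k - (q - 1) := by omega
        rw [he, ih (q - 1) (by omega) (by omega) (by omega)]
    have h2 : ((k + 1 - q : ℕ) : ℝ) * P k (k + 1 - q - 1) q
        = ((k + 1 - q : ℕ) : ℝ) * Nat.factorial k := by
      rcases Nat.eq_zero_or_pos (k + 1 - q) with h | h
      · simp [h]
      · have he : k + 1 - q - 1 = k - q := by omega
        rw [he, ih q hq (by omega) (by omega)]
    have h3 : ((n - 1 - (k + 1 - q) : ℕ) : ℝ) * c * τ ^ 2 * P k (k + 1 - q + 1) q = 0 := by
      rcases Nat.lt_or_ge (k + 1 - q) (n - 1) with h | h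
      · rw [haux k (k + 1 - q + 1) q (by omega) hq (by omega)]; ring
      · have hz : n - 1 - (k + 1 - q) = 0 := by omega
        rw [hz]; simp
    rw [h1, h2, h3]
    have hsum : q + (k + 1 - q) = k + 1 := by omega
    have hsum' : (q : ℝ) + ((k + 1 - q : ℕ) : ℝ) = (k : ℝ) + 1 := by exact_mod_cast hsum
    rw [Nat.factorial_succ]
    push_cast
    nlinarith [hsum']
end

section
/- Let Q be the (m+1)n × (m+1)n block upper bidiagonal matrix with diagonal blocks equal to an n×n matrix K and superdiagonal blocks equal to 1·I, 2·I, …, m·I. Then for every j ≥ 0, the (p,q) block of Q^j equals binom(j,d)·p^{(d)}·K^{j-d} when q = p + d with 0 ≤ d ≤ m (where p^{(d)} = p(p+1)⋯(p+d-1) is the rising factorial, p^{(0)} = 1), and equals 0 when q < p. In particular det Q = (det K)^{m+1}. -/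
/-- The rising factorial p^{(d)} = p(p+1)⋯(p+d-1) of the (1-based) block index p = p₀+1,
written in terms of the 0-based index p₀: ∏_{s<d} (p₀+1+s); by convention p^{(0)} = 1. -/
def risingFac (p₀ d : ℕ) : ℕ := ∏ s ∈ Finset.range d, (p₀ + 1 + s)

/-- The (m+1)n × (m+1)n block upper bidiagonal matrix Q with diagonal blocks K and
superdiagonal blocks 1·I, 2·I, …, m·I (rows and columns indexed by pairs
(block index, inner index)). -/
def blockQ {R : Type*} [CommRing R] (n m : ℕ) (K : Matrix (Fin n) (Fin n) R) :
    Matrix (Fin (m + 1) × Fin n) (Fin (m + 1) × Fin n) R :=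
  Matrix.of fun pi qj =>
    if pi.1 = qj.1 then K pi.2 qj.2
    else if (qj.1 : ℕ) = (pi.1 : ℕ) + 1 then
      (((pi.1 : ℕ) + 1 : ℕ) : R) * (if pi.2 = qj.2 then 1 else 0)
    else 0

/-- Pascal-type recurrence for `choose` times `risingFac`. -/
lemma key_nat (j p d : ℕ) (hd : 1 ≤ d) :
    (j+1).choose d * risingFac p d
      = j.choose d * risingFac p d + j.choose (d-1) * risingFac p (d-1) * (p + d) := by
  obtain ⟨e, rfl⟩ : ∃ e, d = e + 1 := ⟨d - 1, by omega⟩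
  have h1 : risingFac p (e+1) = risingFac p e * (p + 1 + e) := by
    simp [risingFac, Finset.prod_range_succ]
  have h2 : (j+1).choose (e+1) = j.choose e + j.choose (e+1) := Nat.choose_succ_succ j e
  simp only [h1, h2, Nat.add_sub_cancel]
  ring_nf

lemma blockQ_pow_apply {R : Type*} [CommRing R] (n m : ℕ) (K : Matrix (Fin n) (Fin n) R)
    (j : ℕ) (p q : Fin (m + 1)) (i i' : Fin n) :
    (blockQ n m K ^ j) (p, i) (q, i')
      = if (p : ℕ) ≤ (q : ℕ) then
          (j.choose ((q : ℕ) - (p : ℕ)) : R) * (risingFac (p : ℕ) ((q : ℕ) - (p : ℕ)) : R)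
            * (K ^ (j - ((q : ℕ) - (p : ℕ)))) i i'
        else 0 := by
  induction j generalizing p q i i' with
  | zero =>
    rcases lt_trichotomy (p : ℕ) (q : ℕ) with h | h | h
    · have hne : (p, i) ≠ (q, i') := fun e => by
        have hpq : p = q := congrArg Prod.fst e
        rw [hpq] at h; exact lt_irrefl _ h
      have hc : Nat.choose 0 ((q : ℕ) - (p : ℕ)) = 0 :=
        Nat.choose_eq_zero_of_lt (by omega)
      simp [Matrix.one_apply, hne, hc, le_of_lt h]
    · have hpq : p = q := Fin.ext h
      subst hpq
      simp [Matrix.one_apply, Prod.ext_iff, risingFac]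
    · have hne : (p, i) ≠ (q, i') := fun e => by
        have hpq : p = q := congrArg Prod.fst e
        rw [hpq] at h; exact lt_irrefl _ h
      simp [Matrix.one_apply, hne, not_le.mpr h]
  | succ j ih =>
    rw [pow_succ, Matrix.mul_apply, Fintype.sum_prod_type]
    set d := (q : ℕ) - (p : ℕ) with hd
    have hsum : ∀ r : Fin (m + 1),
        (∑ k, (blockQ n m K ^ j) (p, i) (r, k) * blockQ n m K (r, k) (q, i'))
        = (if r = q then
            (if (p : ℕ) ≤ (q : ℕ) then
              (j.choose d : R) * (risingFac (p : ℕ) d : R) * (K ^ (j - d) * K) i i'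
            else 0) else 0)
        + (if (q : ℕ) = (r : ℕ) + 1 then
            (if (p : ℕ) ≤ (r : ℕ) then
              (((r : ℕ) + 1 : ℕ) : R) *
                ((j.choose ((r : ℕ) - (p : ℕ)) : R) * (risingFac (p : ℕ) ((r : ℕ) - (p : ℕ)) : R)
                  * (K ^ (j - ((r : ℕ) - (p : ℕ)))) i i')
            else 0) else 0) := by
      intro r
      have hQ : ∀ k : Fin n, blockQ n m K (r, k) (q, i')
          = if r = q then K k i'
            else if (q : ℕ) = (r : ℕ) + 1 then
              (((r : ℕ) + 1 : ℕ) : R) * (if k = i' then 1 else 0)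
            else 0 := fun k => rfl
      simp only [hQ]
      by_cases hr : r = q
      · subst hr
        have hne : ¬ ((r : ℕ) = (r : ℕ) + 1) := by omega
        simp only [eq_self_iff_true, if_true, hne, if_false, add_zero]
        by_cases hpq : (p : ℕ) ≤ (r : ℕ)
        · simp only [ih, if_pos hpq]
          rw [Matrix.mul_apply, Finset.mul_sum]
          exact Finset.sum_congr rfl fun k _ => by ring
        · simp [ih, hpq]
      · simp only [if_neg hr, zero_add]
        by_cases hq : (q : ℕ) = (r : ℕ) + 1
        · simp only [if_pos hq]
          have hk : ∀ k : Fin n, (blockQ n m K ^ j) (p, i) (r, k) *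
              ((((r : ℕ) + 1 : ℕ) : R) * (if k = i' then 1 else 0))
              = if k = i' then (((r : ℕ) + 1 : ℕ) : R) * (blockQ n m K ^ j) (p, i) (r, k) else 0 := by
            intro k
            by_cases hki : k = i' <;> simp [hki] <;> ring
          rw [Finset.sum_congr rfl fun k _ => hk k, Finset.sum_ite_eq' Finset.univ i']
          simp only [Finset.mem_univ, if_true]
          rw [ih]
          by_cases hpr : (p : ℕ) ≤ (r : ℕ) <;> simp [hpr]
        · simp [hq]
    rw [Finset.sum_congr rfl fun r _ => hsum r, Finset.sum_add_distrib,
      Finset.sum_ite_eq' Finset.univ q]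
    simp only [Finset.mem_univ, if_true]
    -- second sum
    by_cases hq0 : (q : ℕ) = 0
    · have h2 : (∑ r : Fin (m + 1), if (q : ℕ) = (r : ℕ) + 1 then
          (if (p : ℕ) ≤ (r : ℕ) then
            (((r : ℕ) + 1 : ℕ) : R) *
              ((j.choose ((r : ℕ) - (p : ℕ)) : R) * (risingFac (p : ℕ) ((r : ℕ) - (p : ℕ)) : R)
                * (K ^ (j - ((r : ℕ) - (p : ℕ)))) i i')
          else 0) else 0) = 0 := by
        apply Finset.sum_eq_zero
        intro r _
        rw [if_neg (by omega)]
      rw [h2, add_zero]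
      by_cases hpq : (p : ℕ) ≤ (q : ℕ)
      · -- here q = 0 so p = 0 and d = 0
        have hd0 : d = 0 := by omega
        simp only [hd0, Nat.choose_zero_right, Nat.sub_zero,
          Nat.cast_one, risingFac, Finset.range_zero, Finset.prod_empty, pow_succ]
      · rw [if_neg hpq, if_neg hpq]
    · set r₀ : Fin (m + 1) := ⟨(q : ℕ) - 1, by omega⟩ with hr₀
      have hr₀v : (r₀ : ℕ) = (q : ℕ) - 1 := rfl
      have h2 : (∑ r : Fin (m + 1), if (q : ℕ) = (r : ℕ) + 1 then
          (if (p : ℕ) ≤ (r : ℕ) then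
            (((r : ℕ) + 1 : ℕ) : R) *
              ((j.choose ((r : ℕ) - (p : ℕ)) : R) * (risingFac (p : ℕ) ((r : ℕ) - (p : ℕ)) : R)
                * (K ^ (j - ((r : ℕ) - (p : ℕ)))) i i')
          else 0) else 0)
          = (if (p : ℕ) ≤ (r₀ : ℕ) then
            (((r₀ : ℕ) + 1 : ℕ) : R) *
              ((j.choose ((r₀ : ℕ) - (p : ℕ)) : R) * (risingFac (p : ℕ) ((r₀ : ℕ) - (p : ℕ)) : R)
                * (K ^ (j - ((r₀ : ℕ) - (p : ℕ)))) i i')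
          else 0) := by
        rw [Finset.sum_eq_single r₀]
        · rw [if_pos (by rw [hr₀v]; omega)]
        · intro r _ hrne
          rw [if_neg (fun h => hrne (Fin.ext (by rw [hr₀v]; omega)))]
        · intro h; exact absurd (Finset.mem_univ r₀) h
      rw [h2]
      have hq1 : ((r₀ : ℕ) + 1) = (q : ℕ) := by rw [hr₀v]; omega
      by_cases hpq : (p : ℕ) ≤ (q : ℕ)
      · by_cases hpq' : (p : ℕ) = (q : ℕ)
        · -- d = 0
          have hd0 : d = 0 := by omega
          have hple : ¬ ((p : ℕ) ≤ (r₀ : ℕ)) := by rw [hr₀v]; omega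
          simp only [hd0, if_pos hpq, if_neg hple, add_zero, Nat.choose_zero_right,
            Nat.sub_zero, Nat.cast_one, risingFac, Finset.range_zero, Finset.prod_empty,
            pow_succ]
        · -- p < q, d ≥ 1
          have hd1 : 1 ≤ d := by omega
          have hple : (p : ℕ) ≤ (r₀ : ℕ) := by rw [hr₀v]; omega
          have hdd : (r₀ : ℕ) - (p : ℕ) = d - 1 := by rw [hr₀v]; omega
          have e1 : j - (d - 1) = j + 1 - d := by omega
          have hq' : (q : ℕ) = (p : ℕ) + d := by omega
          have key := key_nat j (p : ℕ) d hd1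
          have hc : (((j+1).choose d : ℕ) : R) * (risingFac (p : ℕ) d : R)
              = (j.choose d : R) * (risingFac (p : ℕ) d : R)
                + (((q : ℕ) : ℕ) : R) *
                  ((j.choose (d-1) : R) * (risingFac (p : ℕ) (d-1) : R)) := by
            have hkey := congrArg (Nat.cast : ℕ → R) key
            have hqc := congrArg (Nat.cast : ℕ → R) hq'
            push_cast at hkey hqc ⊢
            rw [hkey, hqc]
            ring
          rw [if_pos hpq, if_pos hple, hdd, e1, hq1, if_pos hpq]
          by_cases hdj : d ≤ j
          · have e2 : (K ^ (j - d) * K) = K ^ (j + 1 - d) := by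
              rw [← pow_succ]; congr 1; omega
            rw [e2]
            linear_combination (-((K ^ (j + 1 - d)) i i')) * hc
          · have hch : j.choose d = 0 := Nat.choose_eq_zero_of_lt (by omega)
            rw [hch] at hc ⊢
            simp only [Nat.cast_zero, zero_mul, zero_add] at hc ⊢
            linear_combination (-((K ^ (j + 1 - d)) i i')) * hc
      · -- p > q : everything vanishes
        have hple : ¬ ((p : ℕ) ≤ (r₀ : ℕ)) := by rw [hr₀v]; omega
        rw [if_neg hpq, if_neg hpq, if_neg hple, add_zero]

/- STATEMENT 18: for every j ≥ 0, the (p,q) block of Q^j equals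
binom(j,d)·p^{(d)}·K^{j-d} when q = p + d, 0 ≤ d ≤ m, and 0 when q < p
(for d > j the binomial coefficient vanishes, consistently with the block being 0).
In particular det Q = (det K)^{m+1}. -/
theorem stmt18 {R : Type*} [CommRing R] (n m : ℕ) (K : Matrix (Fin n) (Fin n) R) :
    (∀ (j : ℕ) (p q : Fin (m + 1)) (i i' : Fin n),
      (blockQ n m K ^ j) (p, i) (q, i')
        = if (p : ℕ) ≤ (q : ℕ) then
            (j.choose ((q : ℕ) - (p : ℕ)) : R) * (risingFac (p : ℕ) ((q : ℕ) - (p : ℕ)) : R)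
              * (K ^ (j - ((q : ℕ) - (p : ℕ)))) i i'
          else 0) ∧
    (blockQ n m K).det = K.det ^ (m + 1) := by
  constructor
  · exact fun j p q i i' => blockQ_pow_apply n m K j p q i i'
  · have hBT : Matrix.BlockTriangular (blockQ n m K) Prod.fst := by
      intro x y h
      have h' : (y.1 : ℕ) < (x.1 : ℕ) := h
      simp only [blockQ, Matrix.of_apply]
      rw [if_neg (fun e => by rw [e] at h'; omega), if_neg (by omega)]
    rw [Matrix.BlockTriangular.det_fintype hBT]
    have hblock : ∀ a : Fin (m + 1),
        ((blockQ n m K).toSquareBlock Prod.fst a).det = K.det := by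
      intro a
      let e : {x : Fin (m + 1) × Fin n // x.1 = a} ≃ Fin n :=
        { toFun := fun x => x.1.2
          invFun := fun i => ⟨(a, i), rfl⟩
          left_inv := by rintro ⟨⟨u, v⟩, rfl⟩; rfl
          right_inv := fun i => rfl }
      rw [← Matrix.det_submatrix_equiv_self e K]
      congr 1
      ext x y
      have hx : x.1.1 = a := x.2
      have hy : y.1.1 = a := y.2
      simp only [Matrix.toSquareBlock_def, Matrix.of_apply, Matrix.submatrix_apply,
        Equiv.coe_fn_mk]
      show blockQ n m K x.1 y.1 = K (e x) (e y)
      simp only [blockQ, Matrix.of_apply, hx, hy, if_pos rfl]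
      rfl
    rw [Finset.prod_congr rfl fun a _ => hblock a, Finset.prod_const, Finset.card_univ,
      Fintype.card_fin]
end

section
/- Let λ₀,…,λ_{n-1} be distinct real (or complex) numbers and m ≥ 0. The ((m+1)n) × ((m+1)n) generalized confluent Vandermonde matrix Ξ with rows indexed by (t,ℓ), t = 0,…,m, ℓ = 0,…,n-1, and columns indexed by k = 0,…,(m+1)n-1, with entries Ξ_{(t,ℓ),k} = binom(k,t)·λ_ℓ^{k-t}, has determinant ∏_{i<j} (λ_j - λ_i)^{(m+1)²}. In particular Ξ is invertible. -/
/-- The generalized (confluent) Vandermonde matrix with nodes λ_0, …, λ_{n-1}, each of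
multiplicity m+1: rows indexed by pairs (ℓ,t) (node ℓ, derivative order t = 0,…,m),
columns indexed by pairs encoding k = k₁(m+1)+k₂ ∈ {0,…,(m+1)n-1}, with entries
binom(k,t) λ_ℓ^{k-t} (the entry vanishes when t > k since binom(k,t) = 0). -/
noncomputable def confluentVandermonde {F : Type*} [Field F] (n m : ℕ) (lam : Fin n → F) :
    Matrix (Fin n × Fin (m + 1)) (Fin n × Fin (m + 1)) F :=
  Matrix.of fun rt k =>
    ((((k.1 : ℕ) * (m + 1) + (k.2 : ℕ)).choose (rt.2 : ℕ) : ℕ) : F)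
      * lam rt.1 ^ (((k.1 : ℕ) * (m + 1) + (k.2 : ℕ)) - (rt.2 : ℕ))

namespace Stmt19Aux

open Polynomial Finset Matrix

variable {F : Type*} [Field F] (n m : ℕ) (lam : Fin n → F)

/-- encoding of a pair index as a natural number -/
def pval (n m : ℕ) (k : Fin n × Fin (m + 1)) : ℕ := (k.1 : ℕ) * (m + 1) + (k.2 : ℕ)

lemma pval_eq (k : Fin n × Fin (m + 1)) :
    pval n m k = ((finProdFinEquiv k : Fin (n * (m + 1))) : ℕ) := by
  simp [pval, finProdFinEquiv]
  ring

/-- the polynomial basis adapted to Hermite data -/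
noncomputable def P (js : Fin n × Fin (m + 1)) : F[X] :=
  (X - C (lam js.1)) ^ (js.2 : ℕ) * ∏ i ∈ Finset.Iio js.1, (X - C (lam i)) ^ (m + 1)

lemma monic_P (js : Fin n × Fin (m + 1)) : (P n m lam js).Monic :=
  ((monic_X_sub_C _).pow _).mul
    (monic_prod_of_monic _ _ fun i _ => (monic_X_sub_C _).pow _)

lemma natDegree_P (js : Fin n × Fin (m + 1)) : (P n m lam js).natDegree = pval n m js := by
  rw [P, Monic.natDegree_mul ((monic_X_sub_C _).pow _)
      (monic_prod_of_monic _ _ fun i _ => (monic_X_sub_C _).pow _),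
    natDegree_pow, natDegree_X_sub_C,
    natDegree_prod_of_monic _ _ (fun i _ => (monic_X_sub_C _).pow _)]
  simp [natDegree_pow, Fin.card_Iio, pval]
  ring

lemma natDegree_P_lt (js : Fin n × Fin (m + 1)) :
    (P n m lam js).natDegree < n * (m + 1) := by
  rw [natDegree_P]
  have h1 : (js.1 : ℕ) < n := js.1.2
  have h2 : (js.2 : ℕ) < m + 1 := js.2.2
  have : ((js.1 : ℕ) + 1) * (m + 1) ≤ n * (m + 1) := Nat.mul_le_mul_right _ h1
  rw [Nat.add_mul, one_mul] at this
  simp only [pval]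
  omega

lemma coeff_taylor_sum (N : ℕ) (f : F[X]) (hf : f.natDegree < N) (r : F) (t : ℕ) :
    (Polynomial.taylor r f).coeff t
      = ∑ d ∈ Finset.range N, ((d.choose t : ℕ) : F) * r ^ (d - t) * f.coeff d := by
  conv_lhs => rw [f.as_sum_range' N hf]
  rw [map_sum, finset_sum_coeff]
  refine Finset.sum_congr rfl fun d _ => ?_
  rw [taylor_monomial, coeff_C_mul, coeff_X_add_C_pow]
  ring

/-- the unitriangular change-of-basis matrix -/
noncomputable def Bmat : Matrix (Fin n × Fin (m + 1)) (Fin n × Fin (m + 1)) F :=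
  Matrix.of fun k js => (P n m lam js).coeff (pval n m k)

lemma mul_entry (rt js : Fin n × Fin (m + 1)) :
    (confluentVandermonde n m lam * Bmat n m lam) rt js
      = (Polynomial.taylor (lam rt.1) (P n m lam js)).coeff (rt.2 : ℕ) := by
  rw [Matrix.mul_apply,
    coeff_taylor_sum (n * (m + 1)) _ (natDegree_P_lt n m lam js),
    ← Fin.sum_univ_eq_sum_range, ← Equiv.sum_comp (finProdFinEquiv :
        Fin n × Fin (m + 1) ≃ Fin (n * (m + 1)))]
  refine Finset.sum_congr rfl fun k _ => ?_
  rw [← pval_eq]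
  rfl

lemma taylor_P (r : F) (js : Fin n × Fin (m + 1)) :
    Polynomial.taylor r (P n m lam js)
      = (X + C (r - lam js.1)) ^ (js.2 : ℕ)
        * ∏ i ∈ Finset.Iio js.1, (X + C (r - lam i)) ^ (m + 1) := by
  simp only [P, taylor_apply, mul_comp, pow_comp, Polynomial.prod_comp, sub_comp, X_comp,
    C_comp, C_sub, add_sub_assoc]

/-- vanishing below block-diagonal: ℓ < j -/
lemma entry_zero_of_lt (ℓ : Fin n) (t : Fin (m + 1)) (js : Fin n × Fin (m + 1))
    (h : ℓ < js.1) :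
    (Polynomial.taylor (lam ℓ) (P n m lam js)).coeff (t : ℕ) = 0 := by
  rw [taylor_P]
  have hmem : ℓ ∈ Finset.Iio js.1 := Finset.mem_Iio.mpr h
  rw [← Finset.mul_prod_erase _ _ hmem]
  have : (X + C (lam ℓ - lam ℓ)) ^ (m + 1) = X ^ (m + 1) := by simp
  rw [this]
  rw [show (X + C (lam ℓ - lam js.1)) ^ (js.2 : ℕ) *
      (X ^ (m + 1) * ∏ i ∈ (Finset.Iio js.1).erase ℓ, (X + C (lam ℓ - lam i)) ^ (m + 1))
      = ((X + C (lam ℓ - lam js.1)) ^ (js.2 : ℕ) *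
        ∏ i ∈ (Finset.Iio js.1).erase ℓ, (X + C (lam ℓ - lam i)) ^ (m + 1)) * X ^ (m + 1)
      by ring]
  rw [coeff_mul_X_pow']
  simp [Nat.not_le.mpr t.2]

/-- vanishing within a diagonal block above the diagonal: t < s -/
lemma entry_zero_of_lt' (ℓ : Fin n) (t s : Fin (m + 1)) (h : (t : ℕ) < (s : ℕ)) :
    (Polynomial.taylor (lam ℓ) (P n m lam (ℓ, s))).coeff (t : ℕ) = 0 := by
  rw [taylor_P]
  simp only [sub_self, map_zero, add_zero]
  rw [mul_comm, coeff_mul_X_pow']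
  simp [Nat.not_le.mpr h]

/-- the diagonal entries -/
lemma entry_diag (ℓ : Fin n) (s : Fin (m + 1)) :
    (Polynomial.taylor (lam ℓ) (P n m lam (ℓ, s))).coeff (s : ℕ)
      = ∏ i ∈ Finset.Iio ℓ, (lam ℓ - lam i) ^ (m + 1) := by
  rw [taylor_P]
  simp only [sub_self, map_zero, add_zero]
  rw [mul_comm, coeff_mul_X_pow']
  simp only [le_refl, if_true, Nat.sub_self]
  rw [coeff_zero_eq_eval_zero]
  simp [Polynomial.eval_prod]

lemma pval_lt_cases (k l : Fin n × Fin (m + 1)) (h : pval n m k < pval n m l) :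
    k.1 < l.1 ∨ (k.1 = l.1 ∧ (k.2 : ℕ) < (l.2 : ℕ)) := by
  rcases lt_trichotomy k.1 l.1 with h1 | h1 | h1
  · exact Or.inl h1
  · exact Or.inr ⟨h1, by simp only [pval, h1] at h; omega⟩
  · exfalso
    have hk2 : (k.2 : ℕ) < m + 1 := k.2.2
    have hl2 : (l.2 : ℕ) < m + 1 := l.2.2
    have : ((l.1 : ℕ) + 1) * (m + 1) ≤ (k.1 : ℕ) * (m + 1) :=
      Nat.mul_le_mul_right _ h1
    rw [Nat.add_mul, one_mul] at this
    simp only [pval] at h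
    omega

lemma det_Bmat : (Bmat n m lam : Matrix _ _ F).det = 1 := by
  have e := (finProdFinEquiv : Fin n × Fin (m + 1) ≃ Fin (n * (m + 1)))
  rw [← Matrix.det_submatrix_equiv_self
      (finProdFinEquiv : Fin n × Fin (m + 1) ≃ Fin (n * (m + 1))).symm (Bmat n m lam)]
  rw [Matrix.det_of_upperTriangular]
  · refine Finset.prod_eq_one fun r _ => ?_
    simp only [Matrix.submatrix_apply, Bmat, Matrix.of_apply]
    have : pval n m (finProdFinEquiv.symm r) = (P n m lam (finProdFinEquiv.symm r)).natDegree := by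
      rw [natDegree_P]
    rw [this]
    exact (monic_P n m lam _).coeff_natDegree
  · intro r c hc
    simp only [Matrix.submatrix_apply, Bmat, Matrix.of_apply, id] at *
    apply Polynomial.coeff_eq_zero_of_natDegree_lt
    rw [natDegree_P, pval_eq, pval_eq, Equiv.apply_symm_apply, Equiv.apply_symm_apply]
    exact hc

lemma det_main :
    (confluentVandermonde n m lam * Bmat n m lam).det
      = ∏ ℓ : Fin n, ∏ i ∈ Finset.Iio ℓ, (lam ℓ - lam i) ^ ((m + 1) ^ 2) := by
  rw [← Matrix.det_submatrix_equiv_self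
      (finProdFinEquiv : Fin n × Fin (m + 1) ≃ Fin (n * (m + 1))).symm
      (confluentVandermonde n m lam * Bmat n m lam)]
  rw [Matrix.det_of_lowerTriangular]
  · rw [← Equiv.prod_comp (finProdFinEquiv : Fin n × Fin (m + 1) ≃ Fin (n * (m + 1)))]
    simp only [Equiv.symm_apply_apply, Matrix.submatrix_apply]
    have key : ∀ (ℓ : Fin n) (t : Fin (m + 1)),
        (confluentVandermonde n m lam * Bmat n m lam) (ℓ, t) (ℓ, t)
          = ∏ i ∈ Finset.Iio ℓ, (lam ℓ - lam i) ^ (m + 1) := by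
      intro ℓ t
      rw [mul_entry]
      exact entry_diag n m lam ℓ t
    rw [Fintype.prod_prod_type]
    refine Finset.prod_congr rfl fun ℓ _ => ?_
    rw [Finset.prod_congr rfl fun t _ => key ℓ t, Finset.prod_const, Finset.card_univ,
      Fintype.card_fin, ← Finset.prod_pow]
    refine Finset.prod_congr rfl fun i _ => ?_
    rw [← pow_mul, sq]
  · intro r c hrc
    have hrc' : (r : ℕ) < (c : ℕ) := hrc
    simp only [Matrix.submatrix_apply]
    rw [mul_entry]
    set k := (finProdFinEquiv : Fin n × Fin (m + 1) ≃ Fin (n * (m + 1))).symm r with hk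
    set l := (finProdFinEquiv : Fin n × Fin (m + 1) ≃ Fin (n * (m + 1))).symm c with hl
    have hvals : pval n m k < pval n m l := by
      rw [pval_eq, pval_eq, hk, hl, Equiv.apply_symm_apply, Equiv.apply_symm_apply]
      exact hrc'
    rcases pval_lt_cases n m k l hvals with h | ⟨h1, h2⟩
    · exact entry_zero_of_lt n m lam k.1 k.2 l h
    · have : l = (k.1, l.2) := by rw [h1]
      rw [this]
      exact entry_zero_of_lt' n m lam k.1 k.2 l.2 h2

end Stmt19Aux

/- STATEMENT 19: for distinct λ_0, …, λ_{n-1}, the confluent Vandermonde matrix Ξ has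
determinant ∏_{i<j} (λ_j - λ_i)^{(m+1)²}; in particular Ξ is invertible. -/
theorem stmt19 {F : Type*} [Field F] (n m : ℕ) (lam : Fin n → F)
    (hlam : Function.Injective lam) :
    (confluentVandermonde n m lam).det
      = ∏ p ∈ Finset.univ.filter (fun p : Fin n × Fin n => p.1 < p.2),
          (lam p.2 - lam p.1) ^ ((m + 1) ^ 2) ∧
    IsUnit (confluentVandermonde n m lam) := by
  have hdet : (confluentVandermonde n m lam).det
      = ∏ ℓ : Fin n, ∏ i ∈ Finset.Iio ℓ, (lam ℓ - lam i) ^ ((m + 1) ^ 2) := by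
    have h := Stmt19Aux.det_main n m lam
    rw [Matrix.det_mul, Stmt19Aux.det_Bmat n m lam, mul_one] at h
    exact h
  have hprod : (∏ p ∈ Finset.univ.filter (fun p : Fin n × Fin n => p.1 < p.2),
      (lam p.2 - lam p.1) ^ ((m + 1) ^ 2))
      = ∏ ℓ : Fin n, ∏ i ∈ Finset.Iio ℓ, (lam ℓ - lam i) ^ ((m + 1) ^ 2) := by
    rw [Finset.prod_filter, Fintype.prod_prod_type, Finset.prod_comm]
    refine Finset.prod_congr rfl fun ℓ _ => ?_
    rw [← Finset.prod_filter]
    refine Finset.prod_congr ?_ fun i _ => rfl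
    ext i
    simp [Finset.mem_Iio]
  constructor
  · rw [hdet, hprod]
  · rw [Matrix.isUnit_iff_isUnit_det, hdet, isUnit_iff_ne_zero]
    refine Finset.prod_ne_zero_iff.mpr fun ℓ _ => Finset.prod_ne_zero_iff.mpr fun i hi => ?_
    apply pow_ne_zero
    rw [sub_ne_zero]
    exact fun hh => absurd (hlam hh) (ne_of_gt (Finset.mem_Iio.mp hi))
end
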